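/- (Relative entropy bound for perturbed states, second direction.) Let D be a positive definite density matrix on ℂ^n, let h be a Hermitian n×n matrix, and define the perturbed density matrix D^h = e^{log D + h}/Tr(e^{log D + h}). Then S(D | D^h) = log Tr(e^{log D + h}) − Tr(D h) and S(D | D^h) ≤ 2‖h‖, where ‖·‖ is the operator norm. -/

import Mathlib

open scoped Kronecker ComplexOrder
open Matrix

noncomputable section

namespace TAL

/-- A density matrix: positive semidefinite with trace `1`. -/
def IsDensityMatrix {k : Type*} [Fintype k] [DecidableEq k] (D : Matrix k k ℂ) : Prop :=
  D.PosSemidef ∧ D.trace = 1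

/-- Functional calculus for Hermitian matrices via the spectral decomposition
(junk value `0` on non-Hermitian matrices). -/
def hermCalc {k : Type*} [Fintype k] [DecidableEq k] (f : ℝ → ℝ) (A : Matrix k k ℂ) :
    Matrix k k ℂ :=
  if hA : A.IsHermitian then
    (hA.eigenvectorUnitary : Matrix k k ℂ) *
      Matrix.diagonal (fun i => (f (hA.eigenvalues i) : ℂ)) *
        star (hA.eigenvectorUnitary : Matrix k k ℂ)
  else 0

/-- Matrix logarithm via the spectral decomposition. -/
def matLog {k : Type*} [Fintype k] [DecidableEq k] (A : Matrix k k ℂ) : Matrix k k ℂ :=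
  hermCalc Real.log A

/-- The von Neumann entropy `S(D) = -Tr (D log D)`, computed through the eigenvalues,
with the convention `0 * log 0 = 0` (junk value `0` on non-Hermitian matrices). -/
def vnEntropy {k : Type*} [Fintype k] [DecidableEq k] (A : Matrix k k ℂ) : ℝ :=
  if hA : A.IsHermitian then ∑ i, Real.negMulLog (hA.eigenvalues i) else 0

/-- The Umegaki relative entropy `S(D | E) = Tr (D (log D - log E))`. -/
def relEntropy {k : Type*} [Fintype k] [DecidableEq k] (D E : Matrix k k ℂ) : ℝ :=
  ((D * (matLog D - matLog E)).trace).re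

/-- Partial trace over the second (right) tensor factor. -/
def ptraceR {k₁ k₂ : Type*} [Fintype k₂] (D : Matrix (k₁ × k₂) (k₁ × k₂) ℂ) :
    Matrix k₁ k₁ ℂ :=
  Matrix.of fun i j => ∑ s : k₂, D (i, s) (j, s)

/-- Partial trace over the first (left) tensor factor. -/
def ptraceL {k₁ k₂ : Type*} [Fintype k₁] (D : Matrix (k₁ × k₂) (k₁ × k₂) ℂ) :
    Matrix k₂ k₂ ℂ :=
  Matrix.of fun i j => ∑ s : k₁, D (s, i) (s, j)

/-- The mutual entropy `I_D(A:B) = S(D_A) + S(D_B) - S(D)`. -/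
def mutualEntropy {k₁ k₂ : Type*} [Fintype k₁] [Fintype k₂] [DecidableEq k₁] [DecidableEq k₂]
    (D : Matrix (k₁ × k₂) (k₁ × k₂) ℂ) : ℝ :=
  vnEntropy (ptraceR D) + vnEntropy (ptraceL D) - vnEntropy D

/-- The Gibbs density matrix `e^{-β H} / Tr(e^{-β H})`. -/
def gibbs {k : Type*} [Fintype k] [DecidableEq k] (β : ℝ) (H : Matrix k k ℂ) :
    Matrix k k ℂ :=
  (NormedSpace.exp ((-(β : ℂ)) • H)).trace⁻¹ • NormedSpace.exp ((-(β : ℂ)) • H)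

/-- The free energy functional `F(D) = Tr(H D) - β⁻¹ S(D)` (real part of the trace). -/
def freeEnergy {k : Type*} [Fintype k] [DecidableEq k] (β : ℝ) (H D : Matrix k k ℂ) : ℝ :=
  ((H * D).trace).re - β⁻¹ * vnEntropy D

/-- The ℓ²-operator norm of a matrix. -/
def opNorm {k : Type*} [Fintype k] [DecidableEq k] (A : Matrix k k ℂ) : ℝ :=
  ‖(Matrix.toEuclideanCLM (𝕜 := ℂ) A : EuclideanSpace ℂ k →L[ℂ] EuclideanSpace ℂ k)‖

/-- The trace norm `‖X‖₁ = Tr ((X* X)^{1/2})`. -/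
def traceNorm {k : Type*} [Fintype k] [DecidableEq k] (X : Matrix k k ℂ) : ℝ :=
  (((Matrix.posSemidef_conjTranspose_mul_self X).isHermitian.eigenvectorUnitary.1 *
      Matrix.diagonal (fun i =>
        ((√((Matrix.posSemidef_conjTranspose_mul_self X).isHermitian.eigenvalues i) : ℝ) : ℂ)) *
      (star (Matrix.posSemidef_conjTranspose_mul_self X).isHermitian.eigenvectorUnitary :
        Matrix k k ℂ)).trace).re


/-- The perturbed density matrix `D^h = e^{log D + h} / Tr(e^{log D + h})`. -/
def pert {k : Type*} [Fintype k] [DecidableEq k] (D h : Matrix k k ℂ) : Matrix k k ℂ :=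
  (NormedSpace.exp (matLog D + h)).trace⁻¹ • NormedSpace.exp (matLog D + h)

end TAL

/-!
Write `L = log D` and `c = Tr e^{L + h}`. Since `log D^h = L + h - log c`, the relative entropy is
`log c - Tr (D h)`, and `-Tr (D h) ≤ ‖h‖` because `D` is a density matrix. For `log c ≤ ‖h‖`, an
eigenvalue of `L + h` with unit eigenvector `v` is `⟪v, L v⟫ + ⟪v, h v⟫ ≤ ⟪v, L v⟫ + ‖h‖`; summing
the exponentials over an orthonormal eigenbasis `(vᵢ)` of `L + h` and applying Peierls' inequality
`∑ᵢ e^{⟪vᵢ, L vᵢ⟫} ≤ Tr e^L` (Jensen's inequality with the doubly stochastic weights `|⟪bⱼ, vᵢ⟫|²`,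
`(bⱼ)` an eigenbasis of `L`) gives `c ≤ e^{‖h‖} Tr e^L = e^{‖h‖}`.
-/

open scoped InnerProductSpace Matrix.Norms.L2Operator

namespace Matrix

lemma nonempty_of_trace_ne_zero {k R : Type*} [Fintype k] [AddCommMonoid R] {A : Matrix k k R}
    (hA : A.trace ≠ 0) : Nonempty k := by
  by_contra hk
  rw [not_nonempty_iff] at hk
  exact hA (by simp [Matrix.trace])

variable {𝕜 k : Type*} [RCLike 𝕜] [Fintype k] [DecidableEq k]

lemma trace_eq_sum_inner (A : Matrix k k 𝕜)
    (b : OrthonormalBasis k 𝕜 (EuclideanSpace 𝕜 k)) :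
    A.trace = ∑ i, ⟪b i, toEuclideanCLM (𝕜 := 𝕜) A (b i)⟫_𝕜 :=
  calc A.trace = LinearMap.trace 𝕜 _ (toEuclideanLin A) := by
        rw [toEuclideanLin_eq_toLin_orthonormal, Matrix.trace_toLin_eq]
    _ = _ := LinearMap.trace_eq_sum_inner _ b

namespace IsHermitian

variable {A : Matrix k k 𝕜} (hA : A.IsHermitian)
include hA

lemma toEuclideanCLM_eigenvectorBasis (j : k) :
    toEuclideanCLM (𝕜 := 𝕜) A (hA.eigenvectorBasis j) =
      (hA.eigenvalues j : 𝕜) • hA.eigenvectorBasis j := by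
  apply WithLp.ofLp_injective
  rw [ofLp_toEuclideanCLM, hA.mulVec_eigenvectorBasis, WithLp.ofLp_smul,
    RCLike.real_smul_eq_coe_smul (K := 𝕜)]

lemma eigenvalues_eq_re_inner (j : k) :
    hA.eigenvalues j =
      RCLike.re ⟪hA.eigenvectorBasis j, toEuclideanCLM (𝕜 := 𝕜) A (hA.eigenvectorBasis j)⟫_𝕜 := by
  rw [hA.toEuclideanCLM_eigenvectorBasis, inner_smul_right, inner_self_eq_norm_sq_to_K,
    hA.eigenvectorBasis.orthonormal.1 j]
  simp

lemma inner_eigenvectorBasis_toEuclideanCLM (j : k) (v : EuclideanSpace 𝕜 k) :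
    ⟪hA.eigenvectorBasis j, toEuclideanCLM (𝕜 := 𝕜) A v⟫_𝕜 =
      hA.eigenvalues j * ⟪hA.eigenvectorBasis j, v⟫_𝕜 := by
  have hsymm : (toEuclideanLin A).IsSymmetric := isSymmetric_toEuclideanLin_iff.mpr hA
  rw [← coe_toEuclideanCLM_eq_toEuclideanLin] at hsymm
  rw [← ContinuousLinearMap.coe_coe, ← hsymm, ContinuousLinearMap.coe_coe,
    hA.toEuclideanCLM_eigenvectorBasis, inner_smul_left, RCLike.conj_ofReal]

lemma re_inner_toEuclideanCLM_eq_sum (v : EuclideanSpace 𝕜 k) :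
    RCLike.re ⟪v, toEuclideanCLM (𝕜 := 𝕜) A v⟫_𝕜 =
      ∑ j, hA.eigenvalues j * ‖⟪hA.eigenvectorBasis j, v⟫_𝕜‖ ^ 2 := by
  rw [← hA.eigenvectorBasis.sum_inner_mul_inner, map_sum]
  refine Finset.sum_congr rfl fun j _ => ?_
  rw [hA.inner_eigenvectorBasis_toEuclideanCLM, mul_left_comm, ← inner_conj_symm,
    RCLike.re_ofReal_mul, RCLike.conj_mul, ← RCLike.ofReal_pow, RCLike.ofReal_re]

lemma sum_le_sum_eigenvalues_of_convexOn {ι : Type*} [Fintype ι]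
    (b : OrthonormalBasis ι 𝕜 (EuclideanSpace 𝕜 k)) {f : ℝ → ℝ} (hf : ConvexOn ℝ Set.univ f) :
    ∑ i, f (RCLike.re ⟪b i, toEuclideanCLM (𝕜 := 𝕜) A (b i)⟫_𝕜) ≤ ∑ j, f (hA.eigenvalues j) := by
  set w : ι → k → ℝ := fun i j => ‖⟪hA.eigenvectorBasis j, b i⟫_𝕜‖ ^ 2 with hw
  have hrow : ∀ i, ∑ j, w i j = 1 := fun i => by
    simp [w, hA.eigenvectorBasis.sum_sq_norm_inner_right, b.orthonormal.1 i]
  have hcol : ∀ j, ∑ i, w i j = 1 := fun j => by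
    simp [w, b.sum_sq_norm_inner_left, hA.eigenvectorBasis.orthonormal.1 j]
  calc ∑ i, f (RCLike.re ⟪b i, toEuclideanCLM (𝕜 := 𝕜) A (b i)⟫_𝕜)
      = ∑ i, f (∑ j, w i j • hA.eigenvalues j) := by
        simp only [hA.re_inner_toEuclideanCLM_eq_sum, hw, smul_eq_mul, mul_comm]
    _ ≤ ∑ i, ∑ j, w i j • f (hA.eigenvalues j) := Finset.sum_le_sum fun i _ =>
        hf.map_sum_le (fun j _ => sq_nonneg _) (hrow i) fun _ _ => Set.mem_univ _
    _ = ∑ j, f (hA.eigenvalues j) := by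
        rw [Finset.sum_comm]
        simp only [← Finset.sum_smul, hcol, one_smul]

lemma trace_cfc (f : ℝ → ℝ) : (cfc f A).trace = ∑ i, (f (hA.eigenvalues i) : 𝕜) := by
  rw [hA.cfc_eq, IsHermitian.cfc, Unitary.conjStarAlgAut_apply, trace_mul_cycle,
    Unitary.coe_star_mul_self, one_mul, trace_diagonal]
  rfl

end IsHermitian

lemma IsHermitian.trace_exp {A : Matrix k k ℂ} (hA : A.IsHermitian) :
    (NormedSpace.exp A).trace = ((∑ i, Real.exp (hA.eigenvalues i) : ℝ) : ℂ) := by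
  rw [← CFC.real_exp_eq_normedSpace_exp hA.isSelfAdjoint, hA.trace_cfc,
    RCLike.ofReal_eq_complex_ofReal, Complex.ofReal_sum]

end Matrix

namespace TAL

variable {k : Type*} [Fintype k] [DecidableEq k]

lemma norm_inner_toEuclideanCLM_le (A : Matrix k k ℂ) (v : EuclideanSpace ℂ k) :
    ‖⟪v, toEuclideanCLM (𝕜 := ℂ) A v⟫_ℂ‖ ≤ opNorm A * ‖v‖ ^ 2 :=
  calc ‖⟪v, toEuclideanCLM (𝕜 := ℂ) A v⟫_ℂ‖
      ≤ ‖v‖ * ‖toEuclideanCLM (𝕜 := ℂ) A v‖ := norm_inner_le_norm _ _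
    _ ≤ ‖v‖ * (opNorm A * ‖v‖) := by gcongr; exact ContinuousLinearMap.le_opNorm _ v
    _ = opNorm A * ‖v‖ ^ 2 := by ring

lemma sum_exp_eigenvalues_add_le {A B : Matrix k k ℂ} (hA : A.IsHermitian)
    (hAB : (A + B).IsHermitian) :
    ∑ i, Real.exp (hAB.eigenvalues i) ≤
      Real.exp (opNorm B) * ∑ j, Real.exp (hA.eigenvalues j) := by
  set v := hAB.eigenvectorBasis
  have hshift : ∀ i, hAB.eigenvalues i ≤
      RCLike.re ⟪v i, toEuclideanCLM (𝕜 := ℂ) A (v i)⟫_ℂ + opNorm B := fun i => by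
    have hB := (RCLike.re_le_norm _).trans (norm_inner_toEuclideanCLM_le B (v i))
    rw [v.orthonormal.1 i, one_pow, mul_one] at hB
    rw [hAB.eigenvalues_eq_re_inner, map_add, _root_.add_apply, inner_add_right, map_add]
    gcongr
  calc ∑ i, Real.exp (hAB.eigenvalues i)
      ≤ ∑ i, Real.exp (opNorm B) *
          Real.exp (RCLike.re ⟪v i, toEuclideanCLM (𝕜 := ℂ) A (v i)⟫_ℂ) := by
        gcongr with i
        rw [← Real.exp_add]
        exact Real.exp_le_exp.2 (by linarith [hshift i])
    _ ≤ Real.exp (opNorm B) * ∑ j, Real.exp (hA.eigenvalues j) := by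
        rw [← Finset.mul_sum]
        exact mul_le_mul_of_nonneg_left (hA.sum_le_sum_eigenvalues_of_convexOn v convexOn_exp)
          (Real.exp_nonneg _)

lemma re_trace_exp_add_le {A B : Matrix k k ℂ} (hA : A.IsHermitian) (hAB : (A + B).IsHermitian) :
    (NormedSpace.exp (A + B)).trace.re ≤ Real.exp (opNorm B) * (NormedSpace.exp A).trace.re := by
  rw [hA.trace_exp, hAB.trace_exp, Complex.ofReal_re, Complex.ofReal_re]
  exact sum_exp_eigenvalues_add_le hA hAB

lemma re_trace_exp_pos [Nonempty k] {A : Matrix k k ℂ} (hA : A.IsHermitian) :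
    0 < (NormedSpace.exp A).trace.re := by
  rw [hA.trace_exp, Complex.ofReal_re]
  exact Finset.sum_pos (fun i _ => Real.exp_pos _) Finset.univ_nonempty

lemma norm_trace_mul_le_opNorm {D : Matrix k k ℂ} (hD : IsDensityMatrix D) (A : Matrix k k ℂ) :
    ‖(D * A).trace‖ ≤ opNorm A := by
  obtain ⟨hDpos, hDtr⟩ := hD
  have hDh := hDpos.isHermitian
  have hsum : ∑ j, hDh.eigenvalues j = 1 := by
    simpa [hDtr] using congrArg Complex.re hDh.trace_eq_sum_eigenvalues.symm
  have hexpand : (D * A).trace = ∑ j, (hDh.eigenvalues j : ℂ) *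
      ⟪hDh.eigenvectorBasis j, toEuclideanCLM (𝕜 := ℂ) A (hDh.eigenvectorBasis j)⟫_ℂ := by
    rw [trace_mul_comm, trace_eq_sum_inner _ hDh.eigenvectorBasis]
    refine Finset.sum_congr rfl fun j _ => ?_
    rw [map_mul, mul_apply_eq_comp, hDh.toEuclideanCLM_eigenvectorBasis, map_smul,
      inner_smul_right, RCLike.ofReal_eq_complex_ofReal]
  calc ‖(D * A).trace‖ ≤ ∑ j, hDh.eigenvalues j * opNorm A := by
        rw [hexpand]
        refine (norm_sum_le _ _).trans (Finset.sum_le_sum fun j _ => ?_)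
        rw [norm_mul, Complex.norm_real, Real.norm_of_nonneg (hDpos.eigenvalues_nonneg j)]
        gcongr
        · exact hDpos.eigenvalues_nonneg j
        · simpa [hDh.eigenvectorBasis.orthonormal.1 j] using
            norm_inner_toEuclideanCLM_le A (hDh.eigenvectorBasis j)
    _ = opNorm A := by rw [← Finset.sum_mul, hsum, one_mul]

lemma matLog_eq_log {A : Matrix k k ℂ} (hA : A.IsHermitian) : matLog A = CFC.log A := by
  rw [matLog, hermCalc, dif_pos hA, CFC.log, hA.cfc_eq]
  rfl

lemma isHermitian_matLog {A : Matrix k k ℂ} (hA : A.IsHermitian) : (matLog A).IsHermitian :=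
  matLog_eq_log hA ▸ IsSelfAdjoint.log

open MatrixOrder in
lemma exp_matLog {D : Matrix k k ℂ} (hD : D.PosDef) : NormedSpace.exp (matLog D) = D := by
  rw [matLog_eq_log hD.isHermitian]
  exact CFC.exp_log D hD.isStrictlyPositive

lemma matLog_smul_exp {M : Matrix k k ℂ} (hM : M.IsHermitian) {c : ℝ} (hc : c ≠ 0) :
    matLog (c • NormedSpace.exp M) = Real.log c • 1 + M := by
  have hspec : ∀ x ∈ spectrum ℝ (NormedSpace.exp M), x ≠ 0 := by
    rw [← CFC.real_exp_eq_normedSpace_exp hM.isSelfAdjoint, cfc_map_spectrum Real.exp M]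
    rintro - ⟨x, -, rfl⟩
    exact (Real.exp_pos x).ne'
  rw [matLog_eq_log (hM.exp.smul (star_trivial c)), CFC.log_smul _ hspec hc hM.exp,
    CFC.log_exp M hM.isSelfAdjoint, Algebra.algebraMap_eq_smul_one]

lemma relEntropy_pert_eq {D h : Matrix k k ℂ} (hD : D.PosDef) (hDtr : D.trace = 1)
    (hh : h.IsHermitian) :
    relEntropy D (pert D h) =
      Real.log (NormedSpace.exp (matLog D + h)).trace.re - (D * h).trace.re := by
  have hM := (isHermitian_matLog hD.isHermitian).add hh
  have : Nonempty k := Matrix.nonempty_of_trace_ne_zero (hDtr ▸ one_ne_zero)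
  have hc : (NormedSpace.exp (matLog D + h)).trace =
      ((NormedSpace.exp (matLog D + h)).trace.re : ℂ) := by
    rw [hM.trace_exp, Complex.ofReal_re]
  set c := (NormedSpace.exp (matLog D + h)).trace.re
  have hlog : matLog (pert D h) = (-Real.log c) • 1 + (matLog D + h) := by
    rw [pert, hc, ← Complex.ofReal_inv, Complex.coe_smul,
      matLog_smul_exp hM (inv_ne_zero (re_trace_exp_pos hM).ne'), Real.log_inv]
  have hdiff : matLog D - matLog (pert D h) = Real.log c • 1 - h := by
    rw [hlog]
    module
  rw [relEntropy, hdiff, Matrix.mul_sub, trace_sub, mul_smul_comm, mul_one, trace_smul, hDtr]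
  simp

lemma log_re_trace_exp_matLog_add_le {D h : Matrix k k ℂ} (hD : D.PosDef) (hDtr : D.trace = 1)
    (hh : h.IsHermitian) :
    Real.log (NormedSpace.exp (matLog D + h)).trace.re ≤ opNorm h := by
  have hL := isHermitian_matLog hD.isHermitian
  have : Nonempty k := Matrix.nonempty_of_trace_ne_zero (hDtr ▸ one_ne_zero)
  have hle := re_trace_exp_add_le hL (hL.add hh)
  rw [exp_matLog hD, hDtr, Complex.one_re, mul_one] at hle
  exact (Real.log_le_iff_le_exp (re_trace_exp_pos (hL.add hh))).2 hle

/-- relative entropy bound for perturbed states, second direction. -/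
theorem relEntropy_pert_right {n : ℕ}
    (D : Matrix (Fin n) (Fin n) ℂ) (hD : D.PosDef) (hDtr : D.trace = 1)
    (h : Matrix (Fin n) (Fin n) ℂ) (hh : h.IsHermitian) :
    relEntropy D (pert D h) =
      Real.log (((NormedSpace.exp (matLog D + h)).trace).re) - ((D * h).trace).re ∧
    relEntropy D (pert D h) ≤ 2 * opNorm h := by
  have hS := relEntropy_pert_eq hD hDtr hh
  refine ⟨hS, ?_⟩
  have hlog := log_re_trace_exp_matLog_add_le hD hDtr hh
  have htr := (Complex.abs_re_le_norm _).trans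
    (norm_trace_mul_le_opNorm ⟨hD.posSemidef, hDtr⟩ h)
  rw [hS]
  linarith [neg_abs_le ((D * h).trace.re)]

end TAL
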